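/- Let (H, ·, Δ) be a connected nonunital infinitesimal bialgebra and define e : H → H by e(x) = Σ_{r≥1} (-1)^{r+1} μ^r(Δ^{r}(x)), where μ^r multiplies r tensor factors and Δ^r is the iterated coproduct (with Δ¹ = id, interpreting the r=1 term as x). Then e(x·y) = 0 for all x, y ∈ H. -/

import Mathlib

open scoped TensorProduct

variable {K A : Type*} [Field K] [AddCommGroup A] [Module K A]

/-- The coradical-type filtration: `F₀ = 0`, `F_{p+1} = {x : Δ(x) ∈ F_p ⊗ F_p}`
(so `F₁ = ker Δ = Prim`). -/
noncomputable def Filt (Δ : A →ₗ[K] A ⊗[K] A) : ℕ → Submodule K A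
  | 0 => ⊥
  | p + 1 =>
      Submodule.comap Δ
        (LinearMap.range (TensorProduct.map (Filt Δ p).subtype (Filt Δ p).subtype))

/-- `Mr mul Δ k = μ^{k+1} ∘ Δ^{k}` : the `k`-th term map of the idempotent `e`,
`Mr 0 = id`, `Mr (k+1) = μ ∘ (id ⊗ Mr k) ∘ Δ`. -/
noncomputable def Mr (mul : A →ₗ[K] A →ₗ[K] A) (Δ : A →ₗ[K] A ⊗[K] A) : ℕ → (A →ₗ[K] A)
  | 0 => LinearMap.id
  | k + 1 =>
      (TensorProduct.lift mul).comp
        ((TensorProduct.map LinearMap.id (Mr mul Δ k)).comp Δ)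

section Aux

variable (mul : A →ₗ[K] A →ₗ[K] A) (Δ : A →ₗ[K] A ⊗[K] A)

lemma Mr_zero : Mr mul Δ 0 = LinearMap.id := rfl

lemma Mr_zero_apply (x : A) : Mr mul Δ 0 x = x := rfl

lemma Mr_succ_apply (k : ℕ) (x : A) :
    Mr mul Δ (k + 1) x =
      TensorProduct.lift mul (TensorProduct.map LinearMap.id (Mr mul Δ k) (Δ x)) := rfl

lemma Mr_filt_eq_zero :
    ∀ p : ℕ, ∀ x ∈ Filt Δ p, ∀ k, p ≤ k → Mr mul Δ k x = 0 := by
  intro p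
  induction p with
  | zero =>
      intro x hx k _
      have hx0 : x = 0 := by simpa [Filt] using hx
      simp [hx0]
  | succ p ih =>
      intro x hx k hk
      obtain ⟨k, rfl⟩ : ∃ k', k = k' + 1 := ⟨k - 1, by omega⟩
      have hk' : p ≤ k := by omega
      simp only [Filt, Submodule.mem_comap, LinearMap.mem_range] at hx
      obtain ⟨t, ht⟩ := hx
      rw [Mr_succ_apply, ← ht]
      clear ht
      induction t using TensorProduct.induction_on with
      | zero => simp
      | tmul a b =>
          simp [ih _ b.2 k hk']
      | add s t hs ht => simp only [map_add, hs, ht, add_zero]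

variable (hassoc : ∀ x y z : A, mul (mul x y) z = mul x (mul y z))

include hassoc

lemma lift_map_mulLeft (x : A) (f : A →ₗ[K] A) (t : A ⊗[K] A) :
    TensorProduct.lift mul
        (TensorProduct.map LinearMap.id f (TensorProduct.map (mul x) LinearMap.id t)) =
      mul x (TensorProduct.lift mul (TensorProduct.map LinearMap.id f t)) := by
  induction t using TensorProduct.induction_on with
  | zero => simp
  | tmul a b => simp [hassoc]
  | add s t hs ht => simp only [map_add, hs, ht]

lemma lift_map_mulLeft' (x : A) (t : A ⊗[K] A) :
    TensorProduct.lift mul (TensorProduct.map (mul x) LinearMap.id t) =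
      mul x (TensorProduct.lift mul t) := by
  induction t using TensorProduct.induction_on with
  | zero => simp
  | tmul a b => simp [hassoc]
  | add s t hs ht => simp only [map_add, hs, ht]

lemma lift_map_mulRight (c : A) (t : A ⊗[K] A) :
    TensorProduct.lift mul (TensorProduct.map LinearMap.id (mul.flip c) t) =
      mul (TensorProduct.lift mul t) c := by
  induction t using TensorProduct.induction_on with
  | zero => simp
  | tmul a b => simp [hassoc]
  | add s t hs ht => simp only [map_add, hs, ht, LinearMap.add_apply]

variable (hcompat : ∀ x y : A,
      Δ (mul x y) =
        TensorProduct.map (mul x) LinearMap.id (Δ y) +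
          TensorProduct.map LinearMap.id (mul.flip y) (Δ x) + x ⊗ₜ[K] y)

include hcompat

lemma Mr_mul_key :
    ∀ (n : ℕ) (x y : A),
      Mr mul Δ (n + 1) (mul x y) =
        (∑ ij ∈ Finset.HasAntidiagonal.antidiagonal n, mul (Mr mul Δ ij.1 x) (Mr mul Δ ij.2 y)) +
          ∑ ij ∈ Finset.HasAntidiagonal.antidiagonal (n + 1), mul (Mr mul Δ ij.1 x) (Mr mul Δ ij.2 y) := by
  intro n
  induction n with
  | zero =>
      intro x y
      rw [Mr_succ_apply, hcompat x y]
      simp only [map_add, Mr_zero, TensorProduct.map_id, LinearMap.id_coe, id_eq]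
      rw [lift_map_mulLeft' mul hassoc, lift_map_mulRight mul hassoc]
      rw [Finset.Nat.sum_antidiagonal_succ (n := 0)]
      simp only [Finset.Nat.antidiagonal_zero, Finset.sum_singleton, Mr_zero_apply,
        Mr_succ_apply, Mr_zero, TensorProduct.map_id, LinearMap.id_coe, id_eq,
        TensorProduct.lift.tmul, Nat.zero_add]
      abel
  | succ n ih =>
      intro x y
      have hB : ∀ t : A ⊗[K] A,
          TensorProduct.lift mul
              (TensorProduct.map LinearMap.id (Mr mul Δ (n + 1))
                (TensorProduct.map LinearMap.id (mul.flip y) t)) =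
            (∑ ij ∈ Finset.HasAntidiagonal.antidiagonal n,
                mul (TensorProduct.lift mul
                      (TensorProduct.map LinearMap.id (Mr mul Δ ij.1) t)) (Mr mul Δ ij.2 y)) +
              ∑ ij ∈ Finset.HasAntidiagonal.antidiagonal (n + 1),
                mul (TensorProduct.lift mul
                      (TensorProduct.map LinearMap.id (Mr mul Δ ij.1) t)) (Mr mul Δ ij.2 y) := by
        intro t
        induction t using TensorProduct.induction_on with
        | zero => simp
        | tmul a b =>
            simp only [TensorProduct.map_tmul, LinearMap.id_coe, id_eq, LinearMap.flip_apply,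
              TensorProduct.lift.tmul, ih b y, map_add, map_sum, hassoc]
        | add s t hs ht =>
            simp only [map_add, hs, ht, LinearMap.add_apply, Finset.sum_add_distrib]
            abel
      rw [Mr_succ_apply, hcompat x y]
      simp only [map_add]
      rw [lift_map_mulLeft mul hassoc, hB (Δ x)]
      simp only [TensorProduct.map_tmul, LinearMap.id_coe, id_eq, TensorProduct.lift.tmul,
        ← Mr_succ_apply]
      conv_rhs => rw [Finset.Nat.sum_antidiagonal_succ (n := n + 1),
        Finset.Nat.sum_antidiagonal_succ (n := n)]
      simp only [Mr_zero_apply]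
      abel

lemma partial_sum_eq :
    ∀ (n : ℕ) (x y : A),
      (∑ k ∈ Finset.range (n + 1), ((-1 : ℤ) ^ k) • (Mr mul Δ k (mul x y))) =
        ((-1 : ℤ) ^ n) •
          ∑ ij ∈ Finset.HasAntidiagonal.antidiagonal n, mul (Mr mul Δ ij.1 x) (Mr mul Δ ij.2 y) := by
  intro n
  induction n with
  | zero =>
      intro x y
      simp [Mr_zero_apply]
  | succ n ih =>
      intro x y
      rw [Finset.sum_range_succ, ih, Mr_mul_key mul Δ hassoc hcompat n x y,
        show ((-1 : ℤ) ^ (n + 1)) = -((-1 : ℤ) ^ n) by ring]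
      simp only [neg_smul, smul_add]
      abel

end Aux

/-- In a connected nonunital infinitesimal bialgebra, the idempotent
`e(x) = Σ_{r ≥ 1} (-1)^{r+1} μ^r(Δ^r(x))` (a locally finite sum, rendered here via
eventually constant partial sums) kills products: `e(x·y) = 0`. -/
theorem idempotent_kills_products
    (mul : A →ₗ[K] A →ₗ[K] A) (Δ : A →ₗ[K] A ⊗[K] A)
    (hassoc : ∀ x y z : A, mul (mul x y) z = mul x (mul y z))
    (hcoassoc : ∀ x : A,
      (TensorProduct.assoc K A A A)
          ((TensorProduct.map Δ LinearMap.id) (Δ x)) =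
        (TensorProduct.map LinearMap.id Δ) (Δ x))
    (hcompat : ∀ x y : A,
      Δ (mul x y) =
        TensorProduct.map (mul x) LinearMap.id (Δ y) +
          TensorProduct.map LinearMap.id (mul.flip y) (Δ x) + x ⊗ₜ[K] y)
    (hconn : ∀ x : A, ∃ p, x ∈ Filt Δ p) :
    ∀ x y : A, ∃ N, ∀ n ≥ N,
      (∑ k ∈ Finset.range n, ((-1 : ℤ) ^ k) • (Mr mul Δ k (mul x y))) = 0 := by
  intro x y
  obtain ⟨p, hp⟩ := hconn x
  obtain ⟨q, hq⟩ := hconn y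
  refine ⟨p + q + 1, ?_⟩
  intro n hn
  obtain ⟨m, rfl⟩ : ∃ m, n = m + 1 := ⟨n - 1, by omega⟩
  rw [partial_sum_eq mul Δ hassoc hcompat m x y]
  have hz : ∀ ij ∈ Finset.HasAntidiagonal.antidiagonal m,
      mul (Mr mul Δ ij.1 x) (Mr mul Δ ij.2 y) = 0 := by
    intro ij hij
    rw [Finset.HasAntidiagonal.mem_antidiagonal] at hij
    rcases le_or_gt p ij.1 with h | h
    · rw [Mr_filt_eq_zero mul Δ p x hp ij.1 h]
      simp
    · have hq2 : q ≤ ij.2 := by omega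
      rw [Mr_filt_eq_zero mul Δ q y hq ij.2 hq2]
      simp
  rw [Finset.sum_eq_zero hz, smul_zero]
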